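/- arXiv:2509.13248 — 7 statements merged into one kernel-verified Lean document; each statement's English description precedes it below -/
import Mathlib

section
/- Let p be a prime, n ≥ 3 an odd integer, and write B = p^k·B', C = p^ℓ·C' with p ∤ B'C'. If ℓ is odd, k is odd, and ℓ < k < n + ℓ, then there is no solution (x, y, z) ∈ ℤ_p³ to x² + B·y² = C·z^n with at least one of x, y, z a p-adic unit. -/
/-!
A square has even valuation, so `x² + a` cannot have exact odd valuation `m` when `p^(m+1) ∣ a`.
If `p ∤ z`, the right side has exact valuation `ℓ`, while the middle term is divisible by
`p^k`, `k > ℓ`; hence `p ∣ z`. The right side is then divisible by `p^(ℓ+n)`, `ℓ + n > k`,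
and if `p ∤ y` the middle term has exact valuation `k`; hence `p ∣ y`. Finally `p ∣ x²`.
-/

section Prime

variable {R : Type*}

theorem Prime.pow_succ_dvd_sq_of_pow_dvd_sq [CommMonoidWithZero R] [IsCancelMulZero R] {p x : R}
    (hp : Prime p) {m : ℕ} (hm : Odd m) (h : p ^ m ∣ x ^ 2) : p ^ (m + 1) ∣ x ^ 2 := by
  rw [pow_dvd_iff_le_emultiplicity, emultiplicity_pow hp] at h ⊢
  cases hx : emultiplicity p x using ENat.recTopCoe with
  | top => simp
  | coe j =>
    rw [hx] at h
    obtain ⟨i, rfl⟩ := hm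
    norm_cast at h ⊢
    omega

theorem Prime.not_pow_succ_dvd_pow_mul_unit [CommMonoidWithZero R] [IsCancelMulZero R] {p u : R}
    (hp : Prime p) (hu : IsUnit u) (m : ℕ) : ¬ p ^ (m + 1) ∣ p ^ m * u := by
  rw [pow_succ, mul_dvd_mul_iff_left (pow_ne_zero m hp.ne_zero)]
  exact fun h => hp.not_isUnit (isUnit_of_dvd_unit h hu)

theorem Prime.sq_add_ne_pow_mul_unit [CommRing R] [IsDomain R] {p x a u : R} (hp : Prime p) {m : ℕ}
    (hm : Odd m) (ha : p ^ (m + 1) ∣ a) (hu : IsUnit u) : x ^ 2 + a ≠ p ^ m * u := by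
  intro h
  have hxm : p ^ m ∣ x ^ 2 := by
    rw [eq_sub_of_add_eq h]
    exact dvd_sub (dvd_mul_right _ _) ((pow_dvd_pow p m.le_succ).trans ha)
  apply hp.not_pow_succ_dvd_pow_mul_unit hu m
  rw [← h]
  exact dvd_add (hp.pow_succ_dvd_sq_of_pow_dvd_sq hm hxm) ha

end Prime

theorem PadicInt.isUnit_of_not_dvd {p : ℕ} [Fact p.Prime] {z : ℤ_[p]} (hz : ¬ (p : ℤ_[p]) ∣ z) :
    IsUnit z := by
  by_contra h
  exact hz ((norm_lt_one_iff_dvd z).mp (not_isUnit_iff.mp h))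

theorem stmt_0_general (p : ℕ) [Fact p.Prime] (n k ℓ : ℕ)
    (B' C' : ℤ_[p]) (hB' : IsUnit B') (hC' : IsUnit C')
    (hℓ : Odd ℓ) (hk : Odd k) (hlk : ℓ < k) (hkn : k < n + ℓ) :
    ¬ ∃ x y z : ℤ_[p],
      x ^ 2 + ((p : ℤ_[p]) ^ k * B') * y ^ 2 = ((p : ℤ_[p]) ^ ℓ * C') * z ^ n ∧
      ¬ ((p : ℤ_[p]) ∣ x ∧ (p : ℤ_[p]) ∣ y ∧ (p : ℤ_[p]) ∣ z) := by
  rintro ⟨x, y, z, heq, hprim⟩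
  have hp : Prime (p : ℤ_[p]) := PadicInt.prime_p
  have hℓ1 : 1 ≤ ℓ := hℓ.pos
  have hz : (p : ℤ_[p]) ∣ z := by
    by_contra hz
    refine hp.sq_add_ne_pow_mul_unit hℓ ?_ (hC'.mul ((PadicInt.isUnit_of_not_dvd hz).pow n))
      (by rw [heq]; ring)
    exact ((pow_dvd_pow _ hlk).mul_right _).mul_right _
  have hy : (p : ℤ_[p]) ∣ y := by
    by_contra hy
    refine hp.sq_add_ne_pow_mul_unit (a := -((p : ℤ_[p]) ^ ℓ * C' * z ^ n)) hk ?_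
      ((hB'.mul ((PadicInt.isUnit_of_not_dvd hy).pow 2)).neg) (by rw [← heq]; ring)
    have hzn : (p : ℤ_[p]) ^ (ℓ + n) ∣ (p : ℤ_[p]) ^ ℓ * C' * z ^ n :=
      pow_add (p : ℤ_[p]) ℓ n ▸ mul_dvd_mul (dvd_mul_right _ _) (pow_dvd_pow_of_dvd hz n)
    exact (dvd_neg).mpr ((pow_dvd_pow _ (by omega)).trans hzn)
  have hx2 : (p : ℤ_[p]) ∣ x ^ 2 := by
    rw [eq_sub_of_add_eq heq]
    exact dvd_sub (((dvd_pow_self _ (by omega)).mul_right _).mul_right _)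
      (((dvd_pow_self _ (by omega)).mul_right _).mul_right _)
  exact hprim ⟨hp.dvd_of_dvd_pow hx2, hy, hz⟩

/-- If `ℓ` is odd, `k` is odd, and `ℓ < k < n + ℓ`, then `x² + p^k B' y² = p^ℓ C' z^n`
has no primitive solution in `ℤ_[p]`. -/
theorem stmt_0 (p : ℕ) [Fact p.Prime] (n k ℓ : ℕ) (hn3 : 3 ≤ n) (hnodd : Odd n)
    (B' C' : ℤ_[p]) (hB' : IsUnit B') (hC' : IsUnit C')
    (hℓ : Odd ℓ) (hk : Odd k) (hlk : ℓ < k) (hkn : k < n + ℓ) :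
    ¬ ∃ x y z : ℤ_[p],
      x ^ 2 + ((p : ℤ_[p]) ^ k * B') * y ^ 2 = ((p : ℤ_[p]) ^ ℓ * C') * z ^ n ∧
      ¬ ((p : ℤ_[p]) ∣ x ∧ (p : ℤ_[p]) ∣ y ∧ (p : ℤ_[p]) ∣ z) :=
  stmt_0_general p n k ℓ B' C' hB' hC' hℓ hk hlk hkn
end

section
/- Let p be an odd prime, n ≥ 3 an odd integer, and write B = p^k·B', C = p^ℓ·C' with p ∤ B'C'. If ℓ is odd, k is even, k < n + ℓ, and −B' is not a square modulo p, then there is no primitive solution (x, y, z) ∈ ℤ_p³ to x² + B·y² = C·z^n. -/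
/-!
Since `-B'` is not a square mod `p`, the form `X² + B'Y²` is anisotropic mod `p`, and peeling off
factors of `p` shows that its value at a nonzero point has even `p`-adic valuation. If `p ∤ z`,
the right-hand side has the odd valuation `ℓ`, which is impossible. If `p ∣ z`, the right-hand side
is divisible by `p^(n+ℓ)` with `n + ℓ > k`, and then anisotropy forces `p ∣ x` and `p ∣ y`.
-/

section AnisotropicForm

variable {R : Type*} [CommRing R] [IsDomain R] {π b : R}

theorem pow_succ_dvd_of_pow_two_mul_add_one_dvd_sq_add_mul_sq (hπ : π ≠ 0)
    (haniso : ∀ x y : R, π ∣ x ^ 2 + b * y ^ 2 → π ∣ x ∧ π ∣ y) :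
    ∀ (m : ℕ) {x y : R}, π ^ (2 * m + 1) ∣ x ^ 2 + b * y ^ 2 →
      π ^ (m + 1) ∣ x ∧ π ^ (m + 1) ∣ y
  | 0, x, y, h => by simpa using haniso x y (by simpa using h)
  | m + 1, x, y, h => by
    obtain ⟨⟨x, rfl⟩, ⟨y, rfl⟩⟩ := haniso _ _ ((dvd_pow_self π (by omega)).trans h)
    have h' : π ^ 2 * π ^ (2 * m + 1) ∣ π ^ 2 * (x ^ 2 + b * y ^ 2) := by
      convert h using 1 <;> ring
    obtain ⟨hx, hy⟩ := pow_succ_dvd_of_pow_two_mul_add_one_dvd_sq_add_mul_sq hπ haniso m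
      ((mul_dvd_mul_iff_left (pow_ne_zero 2 hπ)).mp h')
    rw [pow_succ' π (m + 1)]
    exact ⟨mul_dvd_mul_left π hx, mul_dvd_mul_left π hy⟩

variable {k : ℕ} {x y : R}

theorem sq_add_pow_mul_mul_sq_ne_pow_mul {ℓ : ℕ} {V : R} (hπ : π ≠ 0)
    (haniso : ∀ x y : R, π ∣ x ^ 2 + b * y ^ 2 → π ∣ x ∧ π ∣ y)
    (hk : Even k) (hℓ : Odd ℓ) (hV : ¬ π ∣ V) :
    x ^ 2 + (π ^ k * b) * y ^ 2 ≠ π ^ ℓ * V := by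
  obtain ⟨j, rfl⟩ := hk
  obtain ⟨m, rfl⟩ := hℓ
  intro h
  have hform : x ^ 2 + b * (π ^ j * y) ^ 2 = π ^ (2 * m + 1) * V := by
    rw [← h]; ring
  obtain ⟨⟨x', hx'⟩, ⟨y', hy'⟩⟩ :=
    pow_succ_dvd_of_pow_two_mul_add_one_dvd_sq_add_mul_sq hπ haniso m (hform ▸ dvd_mul_right _ _)
  apply hV
  rw [← mul_dvd_mul_iff_left (pow_ne_zero (2 * m + 1) hπ), ← hform, hx', hy']
  exact ⟨x' ^ 2 + b * y' ^ 2, by ring⟩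

theorem dvd_and_dvd_of_pow_dvd_sq_add_pow_mul_mul_sq {s : ℕ} (hπ : π ≠ 0)
    (haniso : ∀ x y : R, π ∣ x ^ 2 + b * y ^ 2 → π ∣ x ∧ π ∣ y)
    (hk : Even k) (hks : k < s) (h : π ^ s ∣ x ^ 2 + (π ^ k * b) * y ^ 2) :
    π ∣ x ∧ π ∣ y := by
  obtain ⟨j, rfl⟩ := hk
  have hform : π ^ (2 * j + 1) ∣ x ^ 2 + b * (π ^ j * y) ^ 2 := by
    convert (pow_dvd_pow π (by omega : 2 * j + 1 ≤ s)).trans h using 1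
    ring
  obtain ⟨hx, hy⟩ := pow_succ_dvd_of_pow_two_mul_add_one_dvd_sq_add_mul_sq hπ haniso j hform
  rw [pow_succ] at hx hy
  exact ⟨dvd_of_mul_left_dvd hx, (mul_dvd_mul_iff_left (pow_ne_zero j hπ)).mp hy⟩

end AnisotropicForm

namespace PadicInt

variable {p : ℕ} [Fact p.Prime]

theorem dvd_iff_toZMod_eq_zero {x : ℤ_[p]} : (p : ℤ_[p]) ∣ x ↔ toZMod x = 0 := by
  rw [← RingHom.mem_ker, ker_toZMod, maximalIdeal_eq_span_p, Ideal.mem_span_singleton]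

theorem dvd_and_dvd_of_dvd_sq_add_mul_sq {b : ℤ} (hb : legendreSym p (-b) = -1) (x y : ℤ_[p])
    (h : (p : ℤ_[p]) ∣ x ^ 2 + b * y ^ 2) : (p : ℤ_[p]) ∣ x ∧ (p : ℤ_[p]) ∣ y := by
  simp only [dvd_iff_toZMod_eq_zero, map_add, map_mul, map_pow, map_intCast] at h ⊢
  exact legendreSym.eq_zero_mod_of_eq_neg_one hb (by push_cast; linear_combination h)

end PadicInt

theorem stmt_1_general (p : ℕ) [Fact p.Prime] (n k ℓ : ℕ)
    (B' C' : ℤ) (hcop : ¬ (p : ℤ) ∣ B' * C')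
    (hℓ : Odd ℓ) (hk : Even k) (hkn : k < n + ℓ)
    (hleg : legendreSym p (-B') = -1) :
    ¬ ∃ x y z : ℤ_[p],
      x ^ 2 + ((p : ℤ_[p]) ^ k * (B' : ℤ_[p])) * y ^ 2
        = ((p : ℤ_[p]) ^ ℓ * (C' : ℤ_[p])) * z ^ n ∧
      ¬ ((p : ℤ_[p]) ∣ x ∧ (p : ℤ_[p]) ∣ y ∧ (p : ℤ_[p]) ∣ z) := by
  rintro ⟨x, y, z, heq, hprim⟩
  have hp : (p : ℤ_[p]) ≠ 0 := PadicInt.prime_p.ne_zero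
  have haniso := PadicInt.dvd_and_dvd_of_dvd_sq_add_mul_sq hleg
  by_cases hz : (p : ℤ_[p]) ∣ z
  · obtain ⟨w, rfl⟩ := hz
    have hdvd : (p : ℤ_[p]) ^ (n + ℓ) ∣ x ^ 2 + ((p : ℤ_[p]) ^ k * B') * y ^ 2 :=
      ⟨C' * w ^ n, by rw [heq]; ring⟩
    obtain ⟨hx, hy⟩ := dvd_and_dvd_of_pow_dvd_sq_add_pow_mul_mul_sq hp haniso hk hkn hdvd
    exact hprim ⟨hx, hy, dvd_mul_right _ _⟩
  · have hC : ¬ (p : ℤ_[p]) ∣ C' := by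
      rw [← PadicInt.norm_lt_one_iff_dvd, PadicInt.norm_int_lt_one_iff_dvd]
      exact fun h => hcop (h.mul_left B')
    have hV : ¬ (p : ℤ_[p]) ∣ C' * z ^ n := fun h =>
      (PadicInt.prime_p.dvd_mul.mp h).elim hC fun h => hz (PadicInt.prime_p.dvd_of_dvd_pow h)
    exact sq_add_pow_mul_mul_sq_ne_pow_mul hp haniso hk hℓ hV (by rw [heq]; ring)

/-- If `p` is an odd prime, `ℓ` is odd, `k` is even with `k < n + ℓ`, and `-B'` is a
quadratic non-residue mod `p`, then `x² + p^k B' y² = p^ℓ C' z^n` has no primitive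
solution in `ℤ_[p]`. -/
theorem stmt_1 (p : ℕ) [Fact p.Prime] (hp2 : p ≠ 2) (n k ℓ : ℕ) (hn3 : 3 ≤ n)
    (hnodd : Odd n) (B' C' : ℤ) (hcop : ¬ (p : ℤ) ∣ B' * C')
    (hℓ : Odd ℓ) (hk : Even k) (hkn : k < n + ℓ)
    (hleg : legendreSym p (-B') = -1) :
    ¬ ∃ x y z : ℤ_[p],
      x ^ 2 + ((p : ℤ_[p]) ^ k * (B' : ℤ_[p])) * y ^ 2
        = ((p : ℤ_[p]) ^ ℓ * (C' : ℤ_[p])) * z ^ n ∧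
      ¬ ((p : ℤ_[p]) ∣ x ∧ (p : ℤ_[p]) ∣ y ∧ (p : ℤ_[p]) ∣ z) :=
  stmt_1_general p n k ℓ B' C' hcop hℓ hk hkn hleg
end

section
/- Let n ≥ 3 be an odd integer, ℓ an odd positive integer, and let B', C' be odd integers with B' ≡ 3 (mod 8). Then there is no primitive solution (x, y, z) ∈ ℤ₂³ to x² + B'·y² = 2^ℓ·C'·z^n. -/
/-!
Modulo 8, `a² + 3b²` only takes the values `0, 1, 3, 4, 5, 7`, and takes `0` only when `a` and `b`
are both even. So `x² + B y²` is never twice an odd element, and when `8` divides it, `x` and `y`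
are even and halving them divides the sum by `4`. For `z` odd this descent lowers the odd exponent
`ℓ` by `2` until `ℓ = 1`, which is impossible; for `z` even, `8 ∣ z^n` makes `x` and `y` even too,
contradicting primitivity.
-/

namespace ZMod

theorem sq_add_three_mul_sq_ne_two_mul (a b c : ZMod 8) (hc : (c.cast : ZMod 2) ≠ 0) :
    a ^ 2 + 3 * b ^ 2 ≠ 2 * c := by
  revert a b c; decide

theorem cast_eq_zero_of_sq_add_three_mul_sq_eq_zero (a b : ZMod 8) (h : a ^ 2 + 3 * b ^ 2 = 0) :
    (a.cast : ZMod 2) = 0 ∧ (b.cast : ZMod 2) = 0 := by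
  revert a b; decide

end ZMod

namespace PadicInt

theorem pow_dvd_iff_toZModPow_eq_zero {p : ℕ} [Fact p.Prime] (n : ℕ) (x : ℤ_[p]) :
    (p : ℤ_[p]) ^ n ∣ x ↔ toZModPow n x = 0 := by
  rw [← RingHom.mem_ker, ker_toZModPow, Ideal.mem_span_singleton]

theorem dvd_intCast_iff {p : ℕ} [Fact p.Prime] (k : ℤ) :
    (p : ℤ_[p]) ∣ (k : ℤ_[p]) ↔ (p : ℤ) ∣ k :=
  (norm_lt_one_iff_dvd _).symm.trans (norm_int_lt_one_iff_dvd k)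

theorem two_pow_dvd_iff (n : ℕ) (x : ℤ_[2]) : 2 ^ n ∣ x ↔ toZModPow n x = 0 := by
  exact_mod_cast pow_dvd_iff_toZModPow_eq_zero n x

theorem two_dvd_iff_cast_toZModPow_three (x : ℤ_[2]) :
    2 ∣ x ↔ ((toZModPow 3 x).cast : ZMod 2) = 0 := by
  rw [cast_toZModPow 1 3 (by norm_num), ← two_pow_dvd_iff, pow_one]

variable {B x y u : ℤ_[2]}

theorem two_dvd_of_eight_dvd_sq_add_mul_sq (hB : toZModPow 3 B = 3)
    (h : 2 ^ 3 ∣ x ^ 2 + B * y ^ 2) : 2 ∣ x ∧ 2 ∣ y := by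
  rw [two_pow_dvd_iff, map_add, map_mul, map_pow, map_pow, hB] at h
  rw [two_dvd_iff_cast_toZModPow_three, two_dvd_iff_cast_toZModPow_three]
  exact ZMod.cast_eq_zero_of_sq_add_three_mul_sq_eq_zero _ _ h

theorem sq_add_mul_sq_ne_two_mul (hB : toZModPow 3 B = 3) (hu : ¬ 2 ∣ u) :
    x ^ 2 + B * y ^ 2 ≠ 2 * u := by
  intro h
  rw [two_dvd_iff_cast_toZModPow_three] at hu
  apply ZMod.sq_add_three_mul_sq_ne_two_mul _ _ _ hu
  simpa [hB, map_ofNat] using congrArg (toZModPow 3) h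

theorem sq_add_mul_sq_ne_two_pow_odd_mul (hB : toZModPow 3 B = 3) (hu : ¬ 2 ∣ u) (k : ℕ) :
    x ^ 2 + B * y ^ 2 ≠ 2 ^ (2 * k + 1) * u := by
  induction k generalizing x y with
  | zero => simpa using sq_add_mul_sq_ne_two_mul hB hu
  | succ k ih =>
    intro h
    obtain ⟨⟨a, rfl⟩, ⟨b, rfl⟩⟩ :=
      two_dvd_of_eight_dvd_sq_add_mul_sq hB ⟨2 ^ (2 * k) * u, by rw [h]; ring⟩
    apply ih (x := a) (y := b)
    apply mul_left_cancel₀ (by norm_num : (4 : ℤ_[2]) ≠ 0)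
    linear_combination h

end PadicInt

open PadicInt in
theorem stmt_2_general (n ℓ : ℕ) (hn3 : 3 ≤ n) (hℓ : Odd ℓ)
    (B' C' : ℤ) (hC'odd : Odd C') (hB' : B' ≡ 3 [ZMOD 8]) :
    ¬ ∃ x y z : ℤ_[2],
      x ^ 2 + (B' : ℤ_[2]) * y ^ 2 = (2 : ℤ_[2]) ^ ℓ * (C' : ℤ_[2]) * z ^ n ∧
      ¬ ((2 : ℤ_[2]) ∣ x ∧ (2 : ℤ_[2]) ∣ y ∧ (2 : ℤ_[2]) ∣ z) := by
  rintro ⟨x, y, z, heq, hprim⟩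
  have hB : toZModPow 3 (B' : ℤ_[2]) = 3 := by
    rw [map_intCast]
    exact_mod_cast (ZMod.intCast_eq_intCast_iff B' 3 8).mpr hB'
  by_cases hz : 2 ∣ z
  · have h8 : 2 ^ 3 ∣ x ^ 2 + (B' : ℤ_[2]) * y ^ 2 :=
      heq ▸ ((pow_dvd_pow_of_dvd hz 3).trans (pow_dvd_pow z hn3)).mul_left _
    obtain ⟨hx, hy⟩ := two_dvd_of_eight_dvd_sq_add_mul_sq hB h8
    exact hprim ⟨hx, hy, hz⟩
  · obtain ⟨k, rfl⟩ := hℓ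
    have hC : ¬ (2 : ℤ_[2]) ∣ C' := by
      have := dvd_intCast_iff (p := 2) C'
      push_cast at this
      rwa [this, ← even_iff_two_dvd, Int.not_even_iff_odd]
    have h2 : Prime (2 : ℤ_[2]) := by exact_mod_cast prime_p (p := 2)
    have hu : ¬ 2 ∣ (C' : ℤ_[2]) * z ^ n := fun h =>
      (h2.dvd_or_dvd h).elim hC (hz ∘ h2.dvd_of_dvd_pow)
    exact sq_add_mul_sq_ne_two_pow_odd_mul hB hu k (by rw [heq, mul_assoc])

/-- For `ℓ` odd and positive and odd integers `B' ≡ 3 (mod 8)` and `C'`, the equation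
`x² + B' y² = 2^ℓ C' z^n` has no primitive solution in `ℤ₂`. -/
theorem stmt_2 (n ℓ : ℕ) (hn3 : 3 ≤ n) (hnodd : Odd n) (hℓpos : 0 < ℓ) (hℓ : Odd ℓ)
    (B' C' : ℤ) (hB'odd : Odd B') (hC'odd : Odd C') (hB' : B' ≡ 3 [ZMOD 8]) :
    ¬ ∃ x y z : ℤ_[2],
      x ^ 2 + (B' : ℤ_[2]) * y ^ 2 = (2 : ℤ_[2]) ^ ℓ * (C' : ℤ_[2]) * z ^ n ∧
      ¬ ((2 : ℤ_[2]) ∣ x ∧ (2 : ℤ_[2]) ∣ y ∧ (2 : ℤ_[2]) ∣ z) :=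
  stmt_2_general n ℓ hn3 hℓ B' C' hC'odd hB'
end

section
/- Let R be a principal ideal domain, p ∈ R a prime element, n ≥ 3 odd, and B, C ∈ R with p² ∣ B and p² ∣ C. Then the map (x, y, z) ↦ (x/p, y, z) gives a bijection between the set of primitive solutions in R³ of x² + B·y² = C·z^n and the set of primitive solutions in R³ of x² + (B/p²)·y² = (C/p²)·z^n. -/
/-!
Multiplying `x² + B₀ y² = C₀ zⁿ` by `p²` turns a solution `(x, y, z)` into the solution
`(p x, y, z)` of `x² + p² B₀ y² = p² C₀ zⁿ`, and conversely `p² ∣ x²` forces `p ∣ x` for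
`p` prime. Primitivity does not see `x` at all: since `n ≥ 1`, the equation puts `x²` in
`(y, z)`, so `(x, y, z)` is the unit ideal exactly when `(y, z)` is.
-/

theorem Ideal.eq_top_of_pow_mem_of_span_singleton_sup_eq_top {R : Type*} [CommRing R]
    {I : Ideal R} {x : R} {k : ℕ} (hx : x ^ k ∈ I) (h : Ideal.span {x} ⊔ I = ⊤) : I = ⊤ := by
  refine top_le_iff.mp ((Ideal.pow_sup_eq_top (n := k) h).symm.le.trans (sup_le ?_ le_rfl))
  rwa [Ideal.span_singleton_pow, Ideal.span_singleton_le_iff_mem]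

section

variable {R : Type*} [CommRing R]

abbrev PrimitiveSolution (B C : R) (n : ℕ) : Type _ :=
  {t : R × R × R // t.1 ^ 2 + B * t.2.1 ^ 2 = C * t.2.2 ^ n ∧ Ideal.span {t.1, t.2.1, t.2.2} = ⊤}

theorem span_triple_eq_top_iff_of_sq_add_mul_sq_eq {B C x y z : R} {n : ℕ} (hn : n ≠ 0)
    (h : x ^ 2 + B * y ^ 2 = C * z ^ n) :
    Ideal.span {x, y, z} = ⊤ ↔ Ideal.span {y, z} = ⊤ := by
  have hy : y ∈ Ideal.span {y, z} := Ideal.subset_span (Set.mem_insert y {z})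
  have hz : z ∈ Ideal.span {y, z} := Ideal.subset_span (Set.mem_insert_of_mem y rfl)
  have hx : x ^ 2 ∈ Ideal.span {y, z} := by
    rw [show x ^ 2 = C * z ^ n - B * y ^ 2 by linear_combination h]
    exact sub_mem (Ideal.mul_mem_left _ _ (Ideal.pow_mem_of_mem _ hz n (Nat.pos_of_ne_zero hn)))
      (Ideal.mul_mem_left _ _ (Ideal.pow_mem_of_mem _ hy 2 two_pos))
  rw [Ideal.span_insert]
  exact ⟨Ideal.eq_top_of_pow_mem_of_span_singleton_sup_eq_top hx, fun h ↦ by rw [h, sup_top_eq]⟩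

theorem Prime.dvd_of_sq_add_mul_sq_eq {p B C x y z : R} {n : ℕ} (hp : Prime p)
    (h : x ^ 2 + p ^ 2 * B * y ^ 2 = p ^ 2 * C * z ^ n) : p ∣ x :=
  hp.dvd_of_dvd_pow (n := 2) ⟨p * C * z ^ n - p * B * y ^ 2, by linear_combination h⟩

namespace PrimitiveSolution

variable {B C : R} {n : ℕ}

def mulFst (p : R) (hn : n ≠ 0) (t : PrimitiveSolution B C n) :
    PrimitiveSolution (p ^ 2 * B) (p ^ 2 * C) n :=
  have heq : (p * t.1.1) ^ 2 + p ^ 2 * B * t.1.2.1 ^ 2 = p ^ 2 * C * t.1.2.2 ^ n := by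
    linear_combination p ^ 2 * t.2.1
  ⟨(p * t.1.1, t.1.2), heq, (span_triple_eq_top_iff_of_sq_add_mul_sq_eq hn heq).2
    ((span_triple_eq_top_iff_of_sq_add_mul_sq_eq hn t.2.1).1 t.2.2)⟩

variable [IsDomain R] {p : R}

theorem mulFst_injective (hp : p ≠ 0) (hn : n ≠ 0) :
    Function.Injective (mulFst (B := B) (C := C) p hn) := by
  intro s t h
  obtain ⟨hx, hyz⟩ := Prod.mk_inj.1 (congrArg Subtype.val h)
  exact Subtype.ext (Prod.ext (mul_left_cancel₀ hp hx) hyz)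

theorem mulFst_surjective (hp : Prime p) (hn : n ≠ 0) :
    Function.Surjective (mulFst (B := B) (C := C) p hn) := by
  rintro ⟨⟨x, y, z⟩, heq, hspan⟩
  obtain ⟨x, rfl⟩ := hp.dvd_of_sq_add_mul_sq_eq heq
  have heq' : x ^ 2 + B * y ^ 2 = C * z ^ n :=
    mul_left_cancel₀ (pow_ne_zero 2 hp.ne_zero) (by linear_combination heq)
  have hspan' : Ideal.span {x, y, z} = ⊤ :=
    (span_triple_eq_top_iff_of_sq_add_mul_sq_eq hn heq').2
      ((span_triple_eq_top_iff_of_sq_add_mul_sq_eq hn heq).1 hspan)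
  exact ⟨⟨(x, y, z), heq', hspan'⟩, rfl⟩

end PrimitiveSolution

end

theorem stmt_6_general {R : Type*} [CommRing R] [IsDomain R]
    (p : R) (hp : Prime p) (n : ℕ) (hn3 : 3 ≤ n)
    (B C B₀ C₀ : R) (hB : B = p ^ 2 * B₀) (hC : C = p ^ 2 * C₀) :
    ∃ e : {t : R × R × R // t.1 ^ 2 + B * t.2.1 ^ 2 = C * t.2.2 ^ n ∧
            Ideal.span {t.1, t.2.1, t.2.2} = ⊤} ≃
          {t : R × R × R // t.1 ^ 2 + B₀ * t.2.1 ^ 2 = C₀ * t.2.2 ^ n ∧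
            Ideal.span {t.1, t.2.1, t.2.2} = ⊤},
      ∀ t : {t : R × R × R // t.1 ^ 2 + B * t.2.1 ^ 2 = C * t.2.2 ^ n ∧
              Ideal.span {t.1, t.2.1, t.2.2} = ⊤},
        t.val.1 = p * (e t).val.1 ∧ (e t).val.2 = t.val.2 := by
  subst hB hC
  have hn : n ≠ 0 := by omega
  let e : PrimitiveSolution B₀ C₀ n ≃ PrimitiveSolution (p ^ 2 * B₀) (p ^ 2 * C₀) n :=
    .ofBijective (PrimitiveSolution.mulFst p hn)
      ⟨PrimitiveSolution.mulFst_injective hp.ne_zero hn, PrimitiveSolution.mulFst_surjective hp hn⟩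
  refine ⟨e.symm, fun t ↦ ?_⟩
  obtain ⟨hx, hyz⟩ := Prod.mk_inj.1 (congrArg Subtype.val (e.apply_symm_apply t))
  exact ⟨hx.symm, hyz⟩

/-- In a PID `R` with prime `p` and `B = p² B₀`, `C = p² C₀`, the map
`(x, y, z) ↦ (x/p, y, z)` is a bijection between primitive solutions of
`x² + B y² = C zⁿ` and primitive solutions of `x² + B₀ y² = C₀ zⁿ`. -/
theorem stmt_6 {R : Type*} [CommRing R] [IsDomain R] [IsPrincipalIdealRing R]
    (p : R) (hp : Prime p) (n : ℕ) (hn3 : 3 ≤ n) (hnodd : Odd n)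
    (B C B₀ C₀ : R) (hB : B = p ^ 2 * B₀) (hC : C = p ^ 2 * C₀) :
    ∃ e : {t : R × R × R // t.1 ^ 2 + B * t.2.1 ^ 2 = C * t.2.2 ^ n ∧
            Ideal.span {t.1, t.2.1, t.2.2} = ⊤} ≃
          {t : R × R × R // t.1 ^ 2 + B₀ * t.2.1 ^ 2 = C₀ * t.2.2 ^ n ∧
            Ideal.span {t.1, t.2.1, t.2.2} = ⊤},
      ∀ t : {t : R × R × R // t.1 ^ 2 + B * t.2.1 ^ 2 = C * t.2.2 ^ n ∧
              Ideal.span {t.1, t.2.1, t.2.2} = ⊤},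
        t.val.1 = p * (e t).val.1 ∧ (e t).val.2 = t.val.2 :=
  stmt_6_general p hp n hn3 B C B₀ C₀ hB hC
end

section
/- Let p be a prime, n ≥ 3 odd, k an even integer with 1 < k < n + 1, and B', C' ∈ ℤ_p units. If (x, y, z) ∈ ℤ_p³ is a primitive solution of x² + p^k·B'·y² = p·C'·z^n, then p^{k/2} ∣ x, p ∣ z, and the triple (x/p^{k/2}, y, z/p) satisfies x'² + B'·y'² = p^{n+1−k}·C'·z'^n. -/
/-!
Since `k ≥ 2`, `p` divides `x² = p C' zⁿ - p^k B' y²`, so `p² ∣ p C' zⁿ` and, `C'` being a unit,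
`p ∣ z`. With `z = p z'` and `k = 2m ≤ n + 1`, every term other than `x²` is then a multiple of
`(p^m)²`, so `(p^m)² ∣ x²`, which in the integrally closed ring `ℤ_[p]` gives `p^m ∣ x`;
cancelling `(p^m)²` yields the reduced equation.
-/

section Descent

variable {R : Type*} [CommRing R] [IsDomain R]

theorem Prime.dvd_of_sq_add_pow_mul_eq_mul_pow {π B C x y z : R} {k n : ℕ} (hπ : Prime π)
    (hC : IsUnit C) (hk : 2 ≤ k) (hn : n ≠ 0)
    (h : x ^ 2 + π ^ k * B * y ^ 2 = π * C * z ^ n) : π ∣ z := by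
  have hπk : π ^ 2 ∣ π ^ k * B * y ^ 2 := ((pow_dvd_pow π hk).mul_right _).mul_right _
  have hπx : π ∣ x := by
    rw [← hπ.dvd_pow_iff_dvd two_ne_zero, eq_sub_of_add_eq h]
    exact dvd_sub ((dvd_mul_right π C).mul_right _) ((dvd_pow_self π two_ne_zero).trans hπk)
  have hπ2 : π * π ∣ π * (C * z ^ n) := by
    rw [← sq, ← mul_assoc, ← h]
    exact dvd_add (pow_dvd_pow_of_dvd hπx 2) hπk
  have hCz : π ∣ C * z ^ n := (mul_dvd_mul_iff_left hπ.ne_zero).mp hπ2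
  rwa [hC.dvd_mul_left, hπ.dvd_pow_iff_dvd hn] at hCz

theorem exists_eq_mul_of_sq_add_sq_mul_eq_sq_mul [IsIntegrallyClosed R] {c w d x : R}
    (hc : c ≠ 0) (h : x ^ 2 + c ^ 2 * w = c ^ 2 * d) : ∃ x', x = c * x' ∧ x' ^ 2 + w = d := by
  have hcx : c ∣ x := by
    rw [← IsIntegrallyClosed.pow_dvd_pow_iff two_ne_zero, eq_sub_of_add_eq h, ← mul_sub]
    exact dvd_mul_right _ _
  obtain ⟨x', rfl⟩ := hcx
  refine ⟨x', rfl, mul_left_cancel₀ (pow_ne_zero 2 hc) ?_⟩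
  linear_combination h

end Descent

theorem stmt_7_general (p : ℕ) [Fact p.Prime] (n k : ℕ)
    (hkeven : Even k) (hk1 : 1 < k) (hkn : k < n + 1)
    (B' C' : ℤ_[p]) (hC' : IsUnit C')
    (x y z : ℤ_[p])
    (heq : x ^ 2 + ((p : ℤ_[p]) ^ k * B') * y ^ 2 = (p : ℤ_[p]) * C' * z ^ n) :
    ∃ x' z' : ℤ_[p], x = (p : ℤ_[p]) ^ (k / 2) * x' ∧ z = (p : ℤ_[p]) * z' ∧
      x' ^ 2 + B' * y ^ 2 = (p : ℤ_[p]) ^ (n + 1 - k) * C' * z' ^ n := by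
  have hp : Prime (p : ℤ_[p]) := PadicInt.prime_p
  obtain ⟨z', rfl⟩ := hp.dvd_of_sq_add_pow_mul_eq_mul_pow hC' hk1 (by omega) heq
  obtain ⟨m, rfl⟩ := hkeven
  have hpow :
      (p : ℤ_[p]) ^ (n + 1) = ((p : ℤ_[p]) ^ m) ^ 2 * (p : ℤ_[p]) ^ (n + 1 - (m + m)) := by
    rw [← pow_mul, ← pow_add]
    congr 1
    omega
  have hreduced : x ^ 2 + ((p : ℤ_[p]) ^ m) ^ 2 * (B' * y ^ 2)
      = ((p : ℤ_[p]) ^ m) ^ 2 * ((p : ℤ_[p]) ^ (n + 1 - (m + m)) * C' * z' ^ n) := by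
    rw [← pow_mul, mul_two]
    linear_combination heq + C' * z' ^ n * hpow
  obtain ⟨x', rfl, hx'⟩ :=
    exists_eq_mul_of_sq_add_sq_mul_eq_sq_mul (pow_ne_zero m hp.ne_zero) hreduced
  exact ⟨x', z', by rw [← two_mul, Nat.mul_div_cancel_left m two_pos], rfl, hx'⟩

/-- For `k` even with `1 < k < n + 1` and units `B', C' ∈ ℤ_[p]`, a primitive solution
of `x² + p^k B' y² = p C' z^n` satisfies `p^(k/2) ∣ x`, `p ∣ z`, and the reduced
triple satisfies `x'² + B' y² = p^(n+1-k) C' z'^n`. -/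
theorem stmt_7 (p : ℕ) [Fact p.Prime] (n k : ℕ) (hn3 : 3 ≤ n) (hnodd : Odd n)
    (hkeven : Even k) (hk1 : 1 < k) (hkn : k < n + 1)
    (B' C' : ℤ_[p]) (hB' : IsUnit B') (hC' : IsUnit C')
    (x y z : ℤ_[p])
    (heq : x ^ 2 + ((p : ℤ_[p]) ^ k * B') * y ^ 2 = (p : ℤ_[p]) * C' * z ^ n)
    (hprim : ¬ ((p : ℤ_[p]) ∣ x ∧ (p : ℤ_[p]) ∣ y ∧ (p : ℤ_[p]) ∣ z)) :
    ∃ x' z' : ℤ_[p], x = (p : ℤ_[p]) ^ (k / 2) * x' ∧ z = (p : ℤ_[p]) * z' ∧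
      x' ^ 2 + B' * y ^ 2 = (p : ℤ_[p]) ^ (n + 1 - k) * C' * z' ^ n :=
  stmt_7_general p n k hkeven hk1 hkn B' C' hC' x y z heq
end

section
/- Every primitive integer solution (x, y, z) of x² + 3·y² = 31·z³ satisfies 3 ∣ y. -/
/-!
In the Eisenstein integers `ℤ[ω]`, a principal ideal domain, `u = x + y√-3` has norm
`x² + 3y² = 31 z³`. Primitivity makes `z` prime to `6`. Splitting off from `u` a prime of norm
`31` leaves `v` with `v v̄ = z³`; a common divisor of `v` and `v̄` divides `u + ū = 2x`,
`(ū - u)√-3 = 6y` and `z³`, so it is a unit, and `v` is a unit times a cube: `u = w α³` with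
`N w = 31`.

Cubes lie in `ℤ + 6ℤω`, and `re α³ ≡ N α = z (mod 2)` is odd. The elements of norm `31` have
`im w ∈ {±1, ±5, ±6}`. Comparing `ω`-coordinates in `u = w α³` gives
`2y ≡ im w · re α³ (mod 6)`: odd `im w` is impossible, and `im w = ±6` gives `3 ∣ y`.
-/

open QuadraticAlgebra NumberField

namespace QuadraticAlgebra

lemma irreducible_of_irreducible_norm {R : Type*} [CommRing R] {a b : R}
    {z : QuadraticAlgebra R a b} (h : Irreducible z.norm) : Irreducible z where
  not_isUnit hz := h.not_isUnit (isUnit_iff_norm_isUnit.1 hz)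
  isUnit_or_isUnit s t hst := by
    rw [isUnit_iff_norm_isUnit, isUnit_iff_norm_isUnit]
    exact h.isUnit_or_isUnit (by rw [hst, map_mul])

end QuadraticAlgebra

/-- `ω² = -1 - ω`, so `ω` is a primitive cube root of unity. -/
abbrev EisensteinInt : Type := QuadraticAlgebra ℤ (-1) (-1)

namespace EisensteinInt

lemma four_mul_norm (z : EisensteinInt) :
    4 * z.norm = (2 * z.re - z.im) ^ 2 + 3 * z.im ^ 2 := by
  rw [norm_def]
  ring

lemma norm_nonneg (z : EisensteinInt) : 0 ≤ z.norm := by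
  nlinarith [four_mul_norm z, sq_nonneg (2 * z.re - z.im), sq_nonneg z.im]

lemma norm_eq_zero {z : EisensteinInt} : z.norm = 0 ↔ z = 0 := by
  refine ⟨fun h => ?_, fun h => h ▸ norm_zero⟩
  have h4 := four_mul_norm z
  have him : z.im = 0 := by nlinarith [sq_nonneg (2 * z.re - z.im), sq_nonneg z.im]
  ext
  · rw [re_zero]
    nlinarith [sq_nonneg (2 * z.re - z.im)]
  · exact him

lemma norm_eq_one_of_isUnit {z : EisensteinInt} (h : IsUnit z) : z.norm = 1 := by
  rcases Int.isUnit_iff.1 (isUnit_iff_norm_isUnit.1 h) with h1 | h1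
  · exact h1
  · linarith [norm_nonneg z]

section RingOfIntegers

local notation "K" => CyclotomicField 3 ℚ

/-- Instance search finds `DivisionRing.toRatAlgebra` first, which is not reducibly the algebra
structure used by the general instance for `CyclotomicField`. -/
instance : IsCyclotomicExtension {3} ℚ K := CyclotomicField.isCyclotomicExtension 3 ℚ

noncomputable def toRingOfIntegers : EisensteinInt →ₐ[ℤ] 𝓞 K :=
  lift ⟨(IsCyclotomicExtension.zeta_spec 3 ℚ K).toInteger, by
    rw [← sq, ← IsCyclotomicExtension.Rat.Three.coe_eta, IsCyclotomicExtension.Rat.Three.eta_sq]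
    module⟩

lemma toRingOfIntegers_omega :
    toRingOfIntegers ω = (IsCyclotomicExtension.zeta_spec 3 ℚ K).toInteger := by
  simp [toRingOfIntegers]

lemma toRingOfIntegers_injective : Function.Injective toRingOfIntegers := by
  rw [injective_iff_map_eq_zero]
  intro z hz
  have h : ((z.norm : ℤ) : 𝓞 K) = 0 := by
    rw [← eq_intCast (algebraMap ℤ (𝓞 K)), ← toRingOfIntegers.commutes,
      algebraMap_norm_eq_mul_star, map_mul, hz, zero_mul]
  exact norm_eq_zero.1 (by exact_mod_cast h)

lemma toRingOfIntegers_surjective : Function.Surjective toRingOfIntegers := by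
  have hζ := IsCyclotomicExtension.zeta_spec 3 ℚ K
  rw [← AlgHom.range_eq_top, eq_top_iff, ← hζ.integralPowerBasis.adjoin_gen_eq_top,
    hζ.integralPowerBasis_gen, Algebra.adjoin_le_iff, Set.singleton_subset_iff]
  exact ⟨ω, toRingOfIntegers_omega⟩

noncomputable def ringOfIntegersEquiv : EisensteinInt ≃ₐ[ℤ] 𝓞 K :=
  AlgEquiv.ofBijective _ ⟨toRingOfIntegers_injective, toRingOfIntegers_surjective⟩

instance : IsDomain EisensteinInt := ringOfIntegersEquiv.toMulEquiv.isDomain (𝓞 K)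

instance : IsPrincipalIdealRing EisensteinInt :=
  have := IsCyclotomicExtension.Rat.three_pid K
  IsPrincipalIdealRing.of_surjective (ringOfIntegersEquiv.symm : 𝓞 K →+* EisensteinInt)
    ringOfIntegersEquiv.symm.surjective

end RingOfIntegers

lemma prime_of_prime_norm {z : EisensteinInt} (h : Prime z.norm) : Prime z :=
  (irreducible_of_irreducible_norm h.irreducible).prime

lemma exists_dvd_of_norm_dvd {π u : EisensteinInt} (hπ : Prime π.norm) (h : π.norm ∣ u.norm) :
    ∃ σ : EisensteinInt, σ.norm = π.norm ∧ σ ∣ u := by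
  have hπu : π ∣ u * star u := by
    have := map_dvd (algebraMap ℤ EisensteinInt) h
    rw [algebraMap_norm_eq_mul_star, algebraMap_norm_eq_mul_star] at this
    exact (dvd_mul_right π _).trans this
  rcases (prime_of_prime_norm hπ).dvd_or_dvd hπu with h | h
  · exact ⟨π, rfl, h⟩
  · refine ⟨star π, norm_star π, ?_⟩
    simpa only [starRingEnd_apply, star_star] using map_dvd (starRingEnd EisensteinInt) h

lemma exists_eq_mul_pow {π u : EisensteinInt} {c : ℤ} {n : ℕ} (hπ : Prime π.norm)
    (hu : u.norm = π.norm * c ^ n)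
    (hcop : ∀ d, d ∣ u → d ∣ star u → d ∣ (c : EisensteinInt) ^ n → IsUnit d) :
    ∃ w α : EisensteinInt, w.norm = π.norm ∧ u = w * α ^ n := by
  obtain ⟨σ, hσ, v, rfl⟩ := exists_dvd_of_norm_dvd hπ (hu ▸ dvd_mul_right _ _)
  have hv : v * star v = (c : EisensteinInt) ^ n := by
    rw [← hσ, map_mul] at hu
    rw [← algebraMap_norm_eq_mul_star, mul_left_cancel₀ (hσ ▸ hπ.ne_zero) hu]
    simp
  have hrel : IsRelPrime v (star v) := fun d hd hd' =>
    hcop d (hd.mul_left σ) (by rw [star_mul]; exact hd'.mul_right _) (hv ▸ hd.mul_right _)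
  obtain ⟨α, e, he⟩ := exists_associated_pow_of_mul_eq_pow' hrel.isCoprime hv
  refine ⟨σ * e, α, by rw [map_mul, hσ, norm_eq_one_of_isUnit e.isUnit, mul_one], ?_⟩
  rw [← he]
  ring

def sqrtNegThree : EisensteinInt := ⟨1, 2⟩

lemma norm_add_mul_sqrtNegThree (x y : ℤ) :
    (x + y * sqrtNegThree : EisensteinInt).norm = x ^ 2 + 3 * y ^ 2 := by
  simp [norm_def, sqrtNegThree]
  ring

lemma im_add_mul_sqrtNegThree (x y : ℤ) : (x + y * sqrtNegThree : EisensteinInt).im = 2 * y := by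
  simp [sqrtNegThree, mul_comm]

lemma isUnit_of_dvd_add_mul_sqrtNegThree {x y n : ℤ} (h : IsCoprime (6 * (x.gcd y : ℤ)) n)
    {d : EisensteinInt} (hu : d ∣ x + y * sqrtNegThree) (hv : d ∣ star (x + y * sqrtNegThree))
    (hn : d ∣ (n : EisensteinInt)) : IsUnit d := by
  have hx : d ∣ ((2 * x : ℤ) : EisensteinInt) := by
    convert dvd_add hu hv using 1
    ext <;> simp [sqrtNegThree]
    ring
  have hy : d ∣ ((6 * y : ℤ) : EisensteinInt) := by
    convert (dvd_sub hv hu).mul_right sqrtNegThree using 1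
    ext <;> simp [sqrtNegThree] <;> ring
  have hg : d ∣ ((6 * (x.gcd y : ℤ) : ℤ) : EisensteinInt) := by
    rw [Int.gcd_eq_gcd_ab x y]
    convert (hx.mul_right (3 * (x.gcdA y : EisensteinInt))).add (hy.mul_right (x.gcdB y)) using 1
    push_cast
    ring
  exact (h.map (Int.castRingHom EisensteinInt)).isUnit_of_dvd' hg hn

lemma six_dvd_im_pow_three (α : EisensteinInt) : 6 ∣ (α ^ 3).im := by
  have key : ∀ a b : ZMod 2, a * b * (a - b) = 0 := by decide
  have h2 : 2 ∣ α.re * α.im * (α.re - α.im) := by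
    have := key α.re α.im
    exact_mod_cast (ZMod.intCast_zmod_eq_zero_iff_dvd _ 2).1 (by push_cast; exact this)
  have him : (α ^ 3).im = 3 * (α.re * α.im * (α.re - α.im)) := by
    simp [pow_succ]
    ring
  rw [him]
  exact mul_dvd_mul_left 3 h2

lemma odd_re_pow_three {α : EisensteinInt} (h : Odd α.norm) : Odd (α ^ 3).re := by
  have key : ∀ a b : ZMod 2, a ^ 3 - 3 * a * b ^ 2 + b ^ 3 - (a * a - a * b + b * b) = 0 := by
    decide
  have hre : (α ^ 3).re = α.re ^ 3 - 3 * α.re * α.im ^ 2 + α.im ^ 3 := by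
    simp [pow_succ]
    ring
  have h2 : 2 ∣ (α ^ 3).re - α.norm := by
    have := key α.re α.im
    rw [hre, norm_def]
    exact_mod_cast (ZMod.intCast_zmod_eq_zero_iff_dvd _ 2).1 (by push_cast; linear_combination this)
  simpa using (even_iff_two_dvd.2 h2).add_odd h

lemma im_mem_of_norm_eq_31 {w : EisensteinInt} (hw : w.norm = 31) :
    w.im ∈ ({-6, -5, -1, 1, 5, 6} : Finset ℤ) := by
  have h4 := four_mul_norm w
  rw [hw] at h4
  obtain ⟨t, ht⟩ : ∃ t, t = 2 * w.re - w.im := ⟨_, rfl⟩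
  rw [← ht] at h4
  have hb1 : -6 ≤ w.im := by nlinarith [sq_nonneg t]
  have hb2 : w.im ≤ 6 := by nlinarith [sq_nonneg t]
  have ht1 : -11 ≤ t := by nlinarith [sq_nonneg w.im]
  have ht2 : t ≤ 11 := by nlinarith [sq_nonneg w.im]
  generalize w.im = b at *
  clear ht
  interval_cases b <;> interval_cases t <;> first | decide | norm_num at h4

lemma three_dvd_of_im_mul_pow_three {w α : EisensteinInt} {y : ℤ} (hw : w.norm = 31)
    (hα : Odd α.norm) (h : (w * α ^ 3).im = 2 * y) : 3 ∣ y := by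
  have hS := six_dvd_im_pow_three α
  have hR := odd_re_pow_three hα
  have key : 2 * y = w.im * (α ^ 3).re + (w.re - w.im) * (α ^ 3).im := by
    rw [← h, im_mul]
    ring
  have hQ : Odd w.im ∨ 6 ∣ w.im := by
    rcases (by simpa using im_mem_of_norm_eq_31 hw) with h | h | h | h | h | h <;> rw [h] <;> decide
  rcases hQ with hQ | hQ
  · have : Even (w.im * (α ^ 3).re) := by
      rw [even_iff_two_dvd, eq_sub_of_add_eq key.symm]
      exact dvd_sub (dvd_mul_right 2 y) ((dvd_trans ⟨3, rfl⟩ hS).mul_left _)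
    exact absurd this (Int.not_even_iff_odd.2 (hQ.mul hR))
  · have : 3 ∣ 2 * y :=
      key ▸ dvd_add ((dvd_trans ⟨2, rfl⟩ hQ).mul_right _) ((dvd_trans ⟨2, rfl⟩ hS).mul_left _)
    omega

end EisensteinInt

section Primitive

variable {x y z : ℤ}

lemma two_dvd_and_two_dvd_of_two_dvd (heq : x ^ 2 + 3 * y ^ 2 = 31 * z ^ 3) (hz : 2 ∣ z) :
    2 ∣ x ∧ 2 ∣ y := by
  have key : ∀ a b : ZMod 8, a ^ 2 + 3 * b ^ 2 = 0 → 4 * a = 0 ∧ 4 * b = 0 := by decide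
  obtain ⟨c, rfl⟩ := hz
  have h8 : ((x ^ 2 + 3 * y ^ 2 : ℤ) : ZMod 8) = 0 :=
    (ZMod.intCast_zmod_eq_zero_iff_dvd _ 8).2 ⟨31 * c ^ 3, by rw [heq]; ring⟩
  push_cast at h8
  obtain ⟨hx, hy⟩ := key x y h8
  have hx' := (ZMod.intCast_zmod_eq_zero_iff_dvd (4 * x) 8).1 (by push_cast; exact hx)
  have hy' := (ZMod.intCast_zmod_eq_zero_iff_dvd (4 * y) 8).1 (by push_cast; exact hy)
  omega

lemma three_dvd_and_three_dvd_of_three_dvd (heq : x ^ 2 + 3 * y ^ 2 = 31 * z ^ 3)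
    (hz : 3 ∣ z) : 3 ∣ x ∧ 3 ∣ y := by
  obtain ⟨c, rfl⟩ := hz
  have hx : 3 ∣ x := Int.prime_three.dvd_of_dvd_pow (n := 2) ⟨279 * c ^ 3 - y ^ 2, by linarith⟩
  obtain ⟨a, rfl⟩ := hx
  exact ⟨dvd_mul_right 3 a,
    Int.prime_three.dvd_of_dvd_pow (n := 2) ⟨93 * c ^ 3 - a ^ 2, by linarith⟩⟩

lemma isCoprime_six_of_gcd_eq_one (hprim : Int.gcd (Int.gcd x y) z = 1)
    (heq : x ^ 2 + 3 * y ^ 2 = 31 * z ^ 3) : IsCoprime 6 z := by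
  have hp : ∀ p : ℤ, p ∣ x → p ∣ y → p ∣ z → p ∣ 1 := fun p hx hy hz => by
    simpa [hprim] using Int.dvd_coe_gcd (Int.dvd_coe_gcd hx hy) hz
  have h2 : IsCoprime 2 z := Int.prime_two.coprime_iff_not_dvd.2 fun hz => by
    obtain ⟨hx, hy⟩ := two_dvd_and_two_dvd_of_two_dvd heq hz
    exact absurd (hp 2 hx hy hz) (by norm_num)
  have h3 : IsCoprime 3 z := Int.prime_three.coprime_iff_not_dvd.2 fun hz => by
    obtain ⟨hx, hy⟩ := three_dvd_and_three_dvd_of_three_dvd heq hz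
    exact absurd (hp 3 hx hy hz) (by norm_num)
  simpa using h2.mul_left h3

end Primitive

open EisensteinInt in
/-- Every primitive integer solution of `x² + 3y² = 31z³` has `3 ∣ y`. -/
theorem stmt_14 (x y z : ℤ) (hprim : Int.gcd (Int.gcd x y) z = 1)
    (heq : x ^ 2 + 3 * y ^ 2 = 31 * z ^ 3) : (3 : ℤ) ∣ y := by
  have h6 := isCoprime_six_of_gcd_eq_one hprim heq
  have hcop : IsCoprime (6 * (x.gcd y : ℤ)) (z ^ 3) :=
    (h6.mul_left (Int.isCoprime_iff_gcd_eq_one.2 hprim)).pow_right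
  have hu : (x + y * sqrtNegThree : EisensteinInt).norm
      = (⟨6, 1⟩ : EisensteinInt).norm * z ^ 3 := by
    rw [norm_add_mul_sqrtNegThree, heq, norm_def]
    norm_num
  obtain ⟨w, α, hw, hwα⟩ := exists_eq_mul_pow (by norm_num [norm_def]) hu
    fun d h1 h2 h3 => isUnit_of_dvd_add_mul_sqrtNegThree hcop h1 h2 (by push_cast; exact h3)
  have hα : α.norm = z := by
    have h := congrArg QuadraticAlgebra.norm hwα
    rw [hu, map_mul, map_pow, hw] at h
    exact ((Odd.pow_inj (by decide)).1 (mul_left_cancel₀ (by norm_num [norm_def]) h)).symm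
  have hz : Odd z := Int.not_even_iff_odd.1 fun he => by
    simpa [Int.isUnit_iff] using h6.isUnit_of_dvd' ⟨3, rfl⟩ (even_iff_two_dvd.1 he)
  refine three_dvd_of_im_mul_pow_three (by rw [hw, norm_def]; norm_num) (hα ▸ hz) ?_
  rw [← hwα, im_add_mul_sqrtNegThree]
end

section
/- The equation x² + 243·y² = 93·z³ has no primitive integer solutions, i.e. there are no x, y, z ∈ ℤ with gcd(x, y, z) = 1 and x² + 243y² = 93z³. -/
/-!
Since `9 ∣ x` and `3 ∣ z`, a primitive solution yields coprime `b, y` with `b² + 3y² = 31c³` and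
`3 ∤ y`. Put `z = b + y√-3 ∈ ℤ[√-3]`. Every prime `p ∣ c` is odd (`8 ∤ b² + 3y²` for coprime `b, y`)
and, by Thue's lemma, the norm of some `π`; as `z` is primitive, `p³ ∣ N(z)` forces `π³ ∣ z` or
`π̄³ ∣ z`. Peeling off these cubes ends at norm `31`, i.e. at `±2 ± 3√-3`, and the imaginary part of
a cube is divisible by `3`, so `3 ∣ y` after all.
-/

-- Thue's lemma
theorem Int.exists_abs_le_sqrt_dvd_sub_mul (m : ℕ) [NeZero m] (s : ℤ) :
    ∃ x y : ℤ, (x ≠ 0 ∨ y ≠ 0) ∧ |x| ≤ m.sqrt ∧ |y| ≤ m.sqrt ∧ (m : ℤ) ∣ x - s * y := by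
  set n := m.sqrt
  have hcard : Fintype.card (ZMod m) < Fintype.card (Fin (n + 1) × Fin (n + 1)) := by
    simpa [ZMod.card, ← sq] using Nat.lt_succ_sqrt' m
  obtain ⟨⟨i, j⟩, ⟨i', j'⟩, hne, heq⟩ := Fintype.exists_ne_map_eq_of_card_lt
    (fun ij : Fin (n + 1) × Fin (n + 1) => ((ij.1 : ℤ) - s * ij.2 : ZMod m)) hcard
  have hi := i.isLt; have hj := j.isLt; have hi' := i'.isLt; have hj' := j'.isLt
  refine ⟨i - i', j - j', ?_, abs_le.2 ⟨by omega, by omega⟩, abs_le.2 ⟨by omega, by omega⟩, ?_⟩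
  · simp only [ne_eq, Prod.mk.injEq, Fin.ext_iff] at hne
    omega
  · rw [← ZMod.intCast_zmod_eq_zero_iff_dvd]
    push_cast at heq ⊢
    linear_combination heq

theorem Int.exists_sq_add_three_mul_sq_eq {p : ℕ} (hp : p.Prime) (hp2 : p ≠ 2) {s : ℤ}
    (hs : (p : ℤ) ∣ s ^ 2 + 3) : ∃ u v : ℤ, u ^ 2 + 3 * v ^ 2 = p := by
  have := Fact.mk hp
  obtain ⟨x, y, hxy, hx, hy, hdvd⟩ := Int.exists_abs_le_sqrt_dvd_sub_mul p s
  have hsqrt : (p.sqrt : ℤ) ^ 2 < p := by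
    have := (Nat.sqrt_le' p).lt_of_ne fun h => hp.prime.not_isSquare ⟨p.sqrt, h.symm.trans (sq _)⟩
    exact_mod_cast this
  have hpos : 0 < x ^ 2 + 3 * y ^ 2 := by rcases hxy with h | h <;> positivity
  have hlt : x ^ 2 + 3 * y ^ 2 < 4 * p := by
    have := sq_le_sq' (abs_le.1 hx).1 (abs_le.1 hx).2
    have := sq_le_sq' (abs_le.1 hy).1 (abs_le.1 hy).2
    linarith
  obtain ⟨k, hk⟩ : (p : ℤ) ∣ x ^ 2 + 3 * y ^ 2 := by
    have : x ^ 2 + 3 * y ^ 2 = (x - s * y) * (x + s * y) + y ^ 2 * (s ^ 2 + 3) := by ring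
    rw [this]
    exact dvd_add (hdvd.mul_right _) (hs.mul_left _)
  have hp0 : (0 : ℤ) < p := by exact_mod_cast hp.pos
  obtain ⟨hk0, hk4⟩ : 0 < k ∧ k < 4 := ⟨by nlinarith, by nlinarith⟩
  interval_cases k
  · exact ⟨x, y, by linarith⟩
  · -- `x² + 3y²` is never `2 (mod 4)`, while `2p` is
    obtain ⟨t, ht⟩ := hp.odd_of_ne_two hp2
    have h4 : ((x ^ 2 + 3 * y ^ 2 : ℤ) : ZMod 4) = 2 := by
      have h40 : (4 : ZMod 4) = 0 := rfl
      rw [hk, ht]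
      push_cast
      linear_combination (t : ZMod 4) * h40
    push_cast at h4
    exfalso
    generalize (x : ZMod 4) = a, (y : ZMod 4) = b at h4
    revert a b
    decide
  · obtain ⟨x', rfl⟩ : (3 : ℤ) ∣ x :=
      Int.prime_three.dvd_of_dvd_pow (n := 2) ⟨p - y ^ 2, by linarith⟩
    exact ⟨y, x', by linarith⟩

namespace Zsqrtd

variable {d : ℤ}

theorem norm_pow (z : ℤ√d) (k : ℕ) : (z ^ k).norm = z.norm ^ k :=
  map_pow normMonoidHom z k

theorem not_intCast_dvd_of_isCoprime {z : ℤ√d} (hz : IsCoprime z.re z.im) {n : ℤ}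
    (hn : ¬IsUnit n) : ¬(n : ℤ√d) ∣ z := fun h =>
  hn (hz.isUnit_of_dvd' ((intCast_dvd n z).1 h).1 ((intCast_dvd n z).1 h).2)

theorem dvd_of_norm_dvd_star_mul {π z : ℤ√d} (hπ : π.norm ≠ 0)
    (h : (π.norm : ℤ√d) ∣ star π * z) : π ∣ z := by
  obtain ⟨q, hq⟩ := h
  refine ⟨q, Zsqrtd.eq_of_smul_eq_smul_left hπ ?_⟩
  rw [norm_eq_mul_conj, mul_assoc, hq, norm_eq_mul_conj]
  ring

theorem not_dvd_im_of_isCoprime {p : ℤ} (hp : Prime p) {z : ℤ√d} (hz : IsCoprime z.re z.im)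
    (h : p ∣ z.norm) : ¬p ∣ z.im := by
  intro hy
  have hre : p ∣ z.re * z.re := by
    have : z.re * z.re = z.norm + d * z.im * z.im := by rw [norm_def]; ring
    rw [this]
    exact dvd_add h (hy.mul_left _)
  exact hp.not_isUnit (hz.isUnit_of_dvd' ((hp.dvd_or_dvd hre).elim id id) hy)

theorem dvd_of_norm_dvd_im_star_mul {π z : ℤ√d} (hπ : Prime π.norm)
    (hz : IsCoprime z.re z.im) (hnorm : π.norm ∣ z.norm) (him : π.norm ∣ (star π * z).im) :
    π ∣ z := by
  have hre : π.norm ∣ (star π * z).re * z.im := by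
    have : (star π * z).re * z.im = z.re * (star π * z).im + π.im * z.norm := by
      simp only [re_mul, im_mul, re_star, im_star, norm_def]; ring
    rw [this]
    exact dvd_add (him.mul_left _) (hnorm.mul_left _)
  refine dvd_of_norm_dvd_star_mul hπ.ne_zero ((intCast_dvd _ _).2 ⟨?_, him⟩)
  exact (hπ.dvd_or_dvd hre).resolve_right (not_dvd_im_of_isCoprime hπ hz hnorm)

theorem dvd_or_star_dvd {π z : ℤ√d} (hπ : Prime π.norm) (hz : IsCoprime z.re z.im)
    (h : π.norm ∣ z.norm) : π ∣ z ∨ star π ∣ z := by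
  have key : π.norm ∣ (star π * z).im * (π * z).im := by
    have : (star π * z).im * (π * z).im = z.im ^ 2 * π.norm - π.im ^ 2 * z.norm := by
      simp only [im_mul, re_star, im_star, norm_def]; ring
    rw [this]
    exact dvd_sub (dvd_mul_left _ _) (h.mul_left _)
  rcases hπ.dvd_or_dvd key with h1 | h2
  · exact .inl (dvd_of_norm_dvd_im_star_mul hπ hz h h1)
  · refine .inr (dvd_of_norm_dvd_im_star_mul ?_ hz ?_ ?_) <;> simpa only [norm_conj, star_star]

theorem exists_norm_eq_pow_dvd {π z : ℤ√d} (hπ : Prime π.norm) (hz : IsCoprime z.re z.im) :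
    ∀ k : ℕ, π.norm ^ k ∣ z.norm → ∃ σ : ℤ√d, σ.norm = π.norm ∧ σ ^ k ∣ z
  | 0, _ => ⟨π, rfl, by simp⟩
  | k + 1, hk => by
    obtain ⟨σ, hσ, w, rfl⟩ :=
      exists_norm_eq_pow_dvd hπ hz k ((pow_dvd_pow _ k.le_succ).trans hk)
    have hw : IsCoprime w.re w.im := isCoprime_of_dvd_isCoprime hz (dvd_mul_left w _)
    have hnw : σ.norm ∣ w.norm := by
      rw [norm_mul, norm_pow, hσ, pow_succ] at hk
      rw [hσ]
      exact (mul_dvd_mul_iff_left (pow_ne_zero k hπ.ne_zero)).1 hk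
    rw [← hσ] at hπ
    rcases dvd_or_star_dvd hπ hw hnw with h | h
    · exact ⟨σ, hσ, by rw [pow_succ]; exact mul_dvd_mul_left _ h⟩
    rcases k with _ | k
    · exact ⟨star σ, by rw [norm_conj, hσ], by simpa using h⟩
    · -- `σ` and `σ̄` both dividing `z` would make `N(σ) = σ σ̄` divide the primitive `z`
      refine absurd ?_ (not_intCast_dvd_of_isCoprime hz hπ.not_isUnit)
      rw [norm_eq_mul_conj, pow_succ', mul_assoc]
      exact mul_dvd_mul_left σ (dvd_mul_of_dvd_right h _)

theorem three_dvd_im_pow_three_mul (hd : 3 ∣ d) (σ : ℤ√d) {w : ℤ√d} (hw : 3 ∣ w.im) :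
    3 ∣ (σ ^ 3 * w).im := by
  obtain ⟨e, rfl⟩ := hd
  obtain ⟨m, hm⟩ := hw
  refine ⟨(σ ^ 3).re * m + (σ.re ^ 2 * σ.im + e * σ.im ^ 3) * w.re, ?_⟩
  simp only [im_mul, pow_succ, pow_zero, one_mul, re_mul, hm]
  ring

end Zsqrtd

namespace Zsqrtd

theorem norm_eq_sq_add_three_mul_sq (z : ℤ√(-3)) : z.norm = z.re ^ 2 + 3 * z.im ^ 2 := by
  rw [norm_def]; ring

theorem not_eight_dvd_norm {z : ℤ√(-3)} (hz : IsCoprime z.re z.im) : ¬8 ∣ z.norm := by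
  have key : ∀ a b : ZMod 8, a ^ 2 + 3 * b ^ 2 = 0 → 4 * a = 0 ∧ 4 * b = 0 := by decide
  have two_dvd : ∀ n : ℤ, 4 * (n : ZMod 8) = 0 → 2 ∣ n := by
    intro n hn
    have : ((4 * n : ℤ) : ZMod 8) = 0 := by push_cast; exact hn
    rw [ZMod.intCast_zmod_eq_zero_iff_dvd] at this
    omega
  intro h
  have h8 : ((z.norm : ℤ) : ZMod 8) = 0 := (ZMod.intCast_zmod_eq_zero_iff_dvd _ 8).2 h
  rw [norm_eq_sq_add_three_mul_sq] at h8
  push_cast at h8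
  obtain ⟨hre, him⟩ := key _ _ h8
  exact absurd (hz.isUnit_of_dvd' (two_dvd _ hre) (two_dvd _ him)) (by decide)

theorem exists_norm_eq_of_prime_dvd_norm {p : ℕ} (hp : p.Prime) (hp2 : p ≠ 2) {z : ℤ√(-3)}
    (hz : IsCoprime z.re z.im) (hpz : (p : ℤ) ∣ z.norm) : ∃ π : ℤ√(-3), π.norm = p := by
  have := Fact.mk hp
  have him : (z.im : ZMod p) ≠ 0 := by
    rw [ne_eq, ZMod.intCast_zmod_eq_zero_iff_dvd]
    exact not_dvd_im_of_isCoprime (Nat.prime_iff_prime_int.mp hp) hz hpz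
  have hnorm : (z.re : ZMod p) ^ 2 + 3 * (z.im : ZMod p) ^ 2 = 0 := by
    rw [← ZMod.intCast_zmod_eq_zero_iff_dvd, norm_eq_sq_add_three_mul_sq] at hpz
    exact_mod_cast hpz
  obtain ⟨s, hs⟩ := ZMod.intCast_surjective ((z.re : ZMod p) / (z.im : ZMod p))
  have hs3 : (p : ℤ) ∣ s ^ 2 + 3 := by
    rw [← ZMod.intCast_zmod_eq_zero_iff_dvd]
    push_cast
    rw [hs]
    field_simp
    linear_combination hnorm
  obtain ⟨u, v, huv⟩ := Int.exists_sq_add_three_mul_sq_eq hp hp2 hs3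
  exact ⟨⟨u, v⟩, by rw [norm_eq_sq_add_three_mul_sq]; exact huv⟩

theorem three_dvd_im_of_norm_eq_thirtyOne {z : ℤ√(-3)} (h : z.norm = 31) : 3 ∣ z.im := by
  rw [norm_eq_sq_add_three_mul_sq] at h
  generalize z.re = a, z.im = b at h ⊢
  obtain ⟨ha, ha'⟩ : -5 ≤ a ∧ a ≤ 5 := ⟨by nlinarith [sq_nonneg b], by nlinarith [sq_nonneg b]⟩
  obtain ⟨hb, hb'⟩ : -3 ≤ b ∧ b ≤ 3 := ⟨by nlinarith [sq_nonneg a], by nlinarith [sq_nonneg a]⟩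
  interval_cases a <;> interval_cases b <;> omega

theorem three_dvd_im_of_norm_eq_thirtyOne_mul_cube (c : ℕ) {z : ℤ√(-3)}
    (hz : IsCoprime z.re z.im) (hnorm : z.norm = 31 * c ^ 3) : 3 ∣ z.im := by
  induction c using Nat.strong_induction_on generalizing z with
  | _ c ih =>
  have hodd : ¬2 ∣ c := fun ⟨e, he⟩ =>
    not_eight_dvd_norm hz ⟨31 * e ^ 3, by rw [hnorm, he]; push_cast; ring⟩
  rcases eq_or_ne c 1 with rfl | hc1
  · exact three_dvd_im_of_norm_eq_thirtyOne (by simpa using hnorm)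
  obtain ⟨p, hp, e, rfl⟩ := Nat.exists_prime_and_dvd hc1
  have hp2 : p ≠ 2 := fun h => hodd (h ▸ dvd_mul_right p e)
  have hpz : (p : ℤ) ^ 3 ∣ z.norm := ⟨31 * e ^ 3, by rw [hnorm]; push_cast; ring⟩
  obtain ⟨π, hπ⟩ := exists_norm_eq_of_prime_dvd_norm hp hp2 hz
    ((dvd_pow_self _ three_ne_zero).trans hpz)
  obtain ⟨σ, hσ, w, rfl⟩ :=
    exists_norm_eq_pow_dvd (hπ ▸ Nat.prime_iff_prime_int.mp hp) hz 3 (hπ ▸ hpz)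
  have hw : w.norm = 31 * e ^ 3 := by
    have hp0 : (p : ℤ) ^ 3 ≠ 0 := pow_ne_zero _ (by exact_mod_cast hp.ne_zero)
    refine mul_left_cancel₀ hp0 ?_
    calc (p : ℤ) ^ 3 * w.norm = (σ ^ 3 * w).norm := by rw [norm_mul, norm_pow, hσ, hπ]
      _ = (p : ℤ) ^ 3 * (31 * e ^ 3) := by rw [hnorm]; push_cast; ring
  have he_lt : e < p * e := by
    have := hp.two_le
    rcases e.eq_zero_or_pos with rfl | he0
    · exact absurd (dvd_zero 2) hodd
    · nlinarith
  exact three_dvd_im_pow_three_mul (by norm_num) σ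
    (ih e he_lt (isCoprime_of_dvd_isCoprime hz (dvd_mul_left w _)) hw)

end Zsqrtd

theorem Int.isCoprime_of_sq_add_mul_sq_eq {b y c k n : ℤ} {m : ℕ} (hn : Squarefree n)
    (h : b ^ 2 + k * y ^ 2 = n * c ^ m) (hc : IsCoprime (Int.gcd b y : ℤ) c) : IsCoprime b y := by
  have hg : (Int.gcd b y : ℤ) ^ 2 ∣ n * c ^ m := h ▸ dvd_add
    (pow_dvd_pow_of_dvd (Int.gcd_dvd_left b y) 2)
    ((pow_dvd_pow_of_dvd (Int.gcd_dvd_right b y) 2).mul_left k)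
  have hunit := hn _ (by rw [← sq]; exact (hc.pow (m := 2) (n := m)).dvd_of_dvd_mul_right hg)
  rw [Int.isCoprime_iff_gcd_eq_one]
  rcases Int.isUnit_iff.1 hunit with h1 | h1 <;> omega

theorem sq_add_three_mul_sq_eq_of_sq_add_243_mul_sq_eq {x y z : ℤ}
    (h : x ^ 2 + 243 * y ^ 2 = 93 * z ^ 3) :
    ∃ b c : ℤ, x = 9 * b ∧ z = 3 * c ∧ b ^ 2 + 3 * y ^ 2 = 31 * c ^ 3 := by
  have h3 := Int.prime_three
  obtain ⟨a, rfl⟩ : 3 ∣ x := h3.dvd_of_dvd_pow (n := 2) ⟨31 * z ^ 3 - 81 * y ^ 2, by linarith⟩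
  obtain ⟨c, rfl⟩ : 3 ∣ z := h3.dvd_of_dvd_pow (n := 3)
    ((h3.dvd_or_dvd (show (3 : ℤ) ∣ 31 * z ^ 3 from ⟨a ^ 2 + 27 * y ^ 2, by linarith⟩)).resolve_left
      (by norm_num))
  obtain ⟨b, rfl⟩ : 3 ∣ a := h3.dvd_of_dvd_pow (n := 2) ⟨93 * c ^ 3 - 9 * y ^ 2, by linarith⟩
  exact ⟨b, c, by ring, rfl, by linarith⟩

/-- The equation `x² + 243y² = 93z³` has no primitive integer solutions. -/
theorem stmt_16 :
    ¬ ∃ x y z : ℤ, Int.gcd (Int.gcd x y) z = 1 ∧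
      x ^ 2 + 243 * y ^ 2 = 93 * z ^ 3 := by
  rintro ⟨x, y, z, hgcd, h⟩
  have hxyz : IsCoprime (Int.gcd x y : ℤ) z := Int.isCoprime_iff_gcd_eq_one.2 hgcd
  obtain ⟨b, c, rfl, rfl, hbc⟩ := sq_add_three_mul_sq_eq_of_sq_add_243_mul_sq_eq h
  have hy : ¬3 ∣ y := fun hy =>
    absurd (hxyz.isUnit_of_dvd' (Int.dvd_coe_gcd ⟨3 * b, by ring⟩ hy) ⟨c, rfl⟩) (by decide)
  have hby : IsCoprime b y := by
    refine Int.isCoprime_of_sq_add_mul_sq_eq (Int.prime_iff_natAbs_prime.2 (by norm_num)).squarefree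
      hbc (hxyz.of_isCoprime_of_dvd_left ?_).of_mul_right_right
    exact Int.dvd_coe_gcd ((Int.gcd_dvd_left b y).mul_left 9) (Int.gcd_dvd_right b y)
  have hc : 0 ≤ c :=
    (Odd.pow_nonneg_iff (n := 3) (by decide)).1 (by nlinarith [sq_nonneg b, sq_nonneg y])
  lift c to ℕ using hc
  exact hy (Zsqrtd.three_dvd_im_of_norm_eq_thirtyOne_mul_cube c (z := ⟨b, y⟩) hby
    ((Zsqrtd.norm_eq_sq_add_three_mul_sq _).trans hbc))
end
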